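/- The function ξ : (-∞, -1) → ℝ defined by ξ(H) = ∫_0^π (sqrt(2)·H)/sqrt(2H^2 + sin(2t) - 1) dt satisfies lim_{H → -∞} ξ(H) = -π. -/

import Mathlib

/-! Since `-1 ≤ sin (2t) ≤ 1`, the integrand is squeezed between `H / √(H² - 1)` and
`√2 H / √(2H²) = -1`, and the lower bound also tends to `-1` as `H → -∞`. -/

open Real Filter

theorem tendsto_intervalIntegral_of_bounds {α : Type*} {l : Filter α} {f : α → ℝ → ℝ}
    {g h : α → ℝ} {a b c : ℝ} (hab : a ≤ b)
    (hf : ∀ᶠ x in l, IntervalIntegrable (f x) MeasureTheory.volume a b)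
    (hgf : ∀ᶠ x in l, ∀ t ∈ Set.Icc a b, g x ≤ f x t)
    (hfh : ∀ᶠ x in l, ∀ t ∈ Set.Icc a b, f x t ≤ h x)
    (hg : Tendsto g l (nhds c)) (hh : Tendsto h l (nhds c)) :
    Tendsto (fun x => ∫ t in a..b, f x t) l (nhds ((b - a) * c)) := by
  refine tendsto_of_tendsto_of_tendsto_of_le_of_le' (hg.const_mul (b - a)) (hh.const_mul (b - a))
    ?_ ?_
  · filter_upwards [hf, hgf] with x hfx hgfx
    simpa using intervalIntegral.integral_mono_on hab intervalIntegrable_const hfx hgfx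
  · filter_upwards [hf, hfh] with x hfx hfhx
    simpa using intervalIntegral.integral_mono_on hab hfx intervalIntegrable_const hfhx

theorem div_sqrt_le_div_sqrt {x u v : ℝ} (hx : x ≤ 0) (hu : 0 < u) (huv : u ≤ v) :
    x / √u ≤ x / √v := by
  have := div_le_div_of_nonneg_left (neg_nonneg.2 hx) (sqrt_pos.2 hu) (sqrt_le_sqrt huv)
  rwa [neg_div, neg_div, neg_le_neg_iff] at this

theorem tendsto_div_sqrt_sq_sub_one_atBot :
    Tendsto (fun H : ℝ => H / √(H ^ 2 - 1)) atBot (nhds (-1)) := by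
  have hlim : Tendsto (fun H : ℝ => -1 / √(1 - H⁻¹ ^ 2)) atBot (nhds (-1 / √(1 - 0 ^ 2))) :=
    tendsto_const_nhds.div ((tendsto_inv_atBot_zero.pow 2).const_sub 1).sqrt (by norm_num)
  rw [show (-1 : ℝ) / √(1 - 0 ^ 2) = -1 by norm_num] at hlim
  refine hlim.congr' ?_
  filter_upwards [eventually_lt_atBot (0 : ℝ)] with H hH
  have hsq : H ^ 2 - 1 = (-H) ^ 2 * (1 - H⁻¹ ^ 2) := by
    field_simp [hH.ne]
  rw [hsq, sqrt_mul (sq_nonneg _), sqrt_sq (by linarith), ← div_div, div_neg, div_self hH.ne]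

section

variable {H s : ℝ}

theorem div_sqrt_sq_sub_one_le (hH : H < -1) (hs : -1 ≤ s) :
    H / √(H ^ 2 - 1) ≤ √2 * H / √(2 * H ^ 2 + s - 1) := by
  have hrw : H / √(H ^ 2 - 1) = √2 * H / √(2 * H ^ 2 + -1 - 1) := by
    rw [show 2 * H ^ 2 + -1 - 1 = 2 * (H ^ 2 - 1) by ring, sqrt_mul zero_le_two,
      mul_div_mul_left _ _ (sqrt_pos.2 zero_lt_two).ne']
  rw [hrw]
  exact div_sqrt_le_div_sqrt (mul_nonpos_of_nonneg_of_nonpos (sqrt_nonneg 2) (by linarith))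
    (by nlinarith) (by linarith)

theorem sqrt_two_mul_div_sqrt_le_neg_one (hH : H < 0) (hs : s ≤ 1)
    (hpos : 0 < 2 * H ^ 2 + s - 1) : √2 * H / √(2 * H ^ 2 + s - 1) ≤ -1 := by
  have hrw : √2 * H / √(2 * H ^ 2) = -1 := by
    rw [sqrt_mul zero_le_two, sqrt_sq_eq_abs, abs_of_neg hH, mul_neg, div_neg,
      div_self (mul_neg_of_pos_of_neg (sqrt_pos.2 zero_lt_two) hH).ne]
  rw [← hrw]
  exact div_sqrt_le_div_sqrt (mul_nonpos_of_nonneg_of_nonpos (sqrt_nonneg 2) hH.le) hpos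
    (by linarith)

end

theorem stmt_17 :
    Filter.Tendsto
      (fun H : ℝ => ∫ t in (0 : ℝ)..π,
        Real.sqrt 2 * H / Real.sqrt (2 * H ^ 2 + Real.sin (2 * t) - 1))
      Filter.atBot (nhds (-π)) := by
  have hpos : ∀ H : ℝ, H < -1 → ∀ t, 0 < 2 * H ^ 2 + sin (2 * t) - 1 := fun H hH t => by
    nlinarith [neg_one_le_sin (2 * t)]
  rw [show -π = (π - 0) * -1 by ring]
  refine tendsto_intervalIntegral_of_bounds pi_pos.le ?_ ?_ ?_
    tendsto_div_sqrt_sq_sub_one_atBot tendsto_const_nhds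
  all_goals filter_upwards [eventually_lt_atBot (-1 : ℝ)] with H hH
  · refine Continuous.intervalIntegrable ?_ _ _
    exact continuous_const.div (by fun_prop) fun t => (sqrt_pos.2 (hpos H hH t)).ne'
  · exact fun t _ => div_sqrt_sq_sub_one_le hH (neg_one_le_sin _)
  · exact fun t _ => sqrt_two_mul_div_sqrt_le_neg_one (by linarith) (sin_le_one _) (hpos H hH t)
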